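/- Let (Ω, 𝓕, P) be a probability space, C ⊆ L^∞ a convex cone with −L^∞₊ ⊆ C, and Φ : (0,∞) → ℝ convex satisfying the growth condition G(Φ) with Φ(0) < +∞. If M_Φ ∩ ℙ ≠ ∅, then {z ∈ Lin(M_Φ) : E_P[z·f] ≤ 0 for all f ∈ C_Φ} = co(M_Φ); that is, the polar of C_Φ inside the linear span of the densities of M_Φ is exactly the convex cone generated by M_Φ, so C_Φ and co(M_Φ) are polar to one another. -/

import Mathlib

open MeasureTheory Filter

variable {Ω : Type*} [MeasurableSpace Ω]

/-- The set `M₁` of separating measures for the convex cone `C ⊆ L^∞` of bounded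
super-replicable claims: probability measures `Q ≪ P` with `E_Q[g] ≤ 0` for all `g ∈ C`. -/
def sepMeasures (P : Measure Ω) (C : Set (Ω → ℝ)) : Set (Measure Ω) :=
  {Q | IsProbabilityMeasure Q ∧ Q ≪ P ∧ ∀ g ∈ C, ∫ ω, g ω ∂Q ≤ 0}

/-- The set `M_Φ` of separating measures with finite generalized entropy
`E_P[Φ(dQ/dP)] < ∞` (here `Φ(0) < +∞`, `Φ 0` being the limit of `Φ` at `0⁺`, so that
finiteness of the generalized entropy is plain integrability of `Φ(dQ/dP)`). -/
def MPhi (P : Measure Ω) (C : Set (Ω → ℝ)) (Φ : ℝ → ℝ) : Set (Measure Ω) :=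
  {Q ∈ sepMeasures P C | Integrable (fun ω => Φ ((Q.rnDeriv P ω).toReal)) P}

/-- `C_Φ`: the random variables lying, for every `Q ∈ M_Φ`, in the `L¹(Q)`-norm closure
of `C`. -/
def CPhi (P : Measure Ω) (C : Set (Ω → ℝ)) (Φ : ℝ → ℝ) : Set (Ω → ℝ) :=
  {f | ∀ Q ∈ MPhi P C Φ, Integrable f Q ∧
    ∀ ε : ℝ, 0 < ε → ∃ g ∈ C, ∫ ω, |f ω - g ω| ∂Q < ε}

/-- The density `dQ/dP` as an element of `L⁰(P)` (an a.e.-equivalence class). -/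
noncomputable def densAE (P Q : Measure Ω) : Ω →ₘ[P] ℝ :=
  MeasureTheory.AEEqFun.mk (fun ω => (Q.rnDeriv P ω).toReal)
    ((Measure.measurable_rnDeriv Q P).ennreal_toReal).aestronglyMeasurable

/-!
An element `z = ∑ cᵢ • dQᵢ/dP` of the polar is in particular polar to the claims `-1_A ∈ C ⊆ C_Φ`,
so `z ≥ 0`; if `z ≠ 0` then `ρ = z / E_P[z]` is a probability density that separates `C`, and it
remains to see that `Φ(ρ)` is integrable. Since `Φ(0) < ∞`, `Φ` is continuous and convex on
`[0, ∞)` and has an affine minorant, which bounds `Φ(ρ)` from below. From above,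
`ρ ≤ S • y` with `y = ∑ wᵢ • dQᵢ/dP` a convex combination: Jensen gives `Φ(y) ≤ ∑ wᵢ Φ(dQᵢ/dP)`,
the growth condition `G(Φ)` passes to `Φ(S • y)`, and convexity gives
`Φ(ρ) ≤ max (Φ 0) (Φ (S • y))`. Conversely `E_P[l • dQ/dP • f] = l • E_Q[f] ≤ 0` for `f ∈ C_Φ`,
because `E_Q` is `L¹(Q)`-continuous and nonpositive on `C`.
-/

open scoped Topology
open Set

/-- The growth condition `G(Φ)`. -/
def GrowthCondition (Φ : ℝ → ℝ) : Prop :=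
  ∀ l₀ l₁ : ℝ, 0 < l₀ → l₀ ≤ l₁ → ∃ a : ℝ, 0 < a ∧ ∃ b : ℝ, 0 < b ∧
    ∀ y : ℝ, 0 < y → ∀ l ∈ Set.Icc l₀ l₁, max (Φ (l * y)) 0 ≤ a * max (Φ y) 0 + b * (y + 1)

section ConvexOnIci

variable {Φ : ℝ → ℝ}

theorem ConvexOn.continuousOn_Ici_of_tendsto {x₀ : ℝ} (hΦ : ConvexOn ℝ (Ioi x₀) Φ)
    (hΦ0 : Tendsto Φ (𝓝[>] x₀) (𝓝 (Φ x₀))) : ContinuousOn Φ (Ici x₀) := by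
  intro x hx
  rcases (mem_Ici.1 hx).eq_or_lt with rfl | hx0
  · rw [← Ioi_insert, continuousWithinAt_insert_self]
    exact hΦ0
  · exact ((hΦ.continuousOn isOpen_Ioi).continuousAt (Ioi_mem_nhds hx0)).continuousWithinAt

theorem ConvexOn.convexOn_Ici_of_continuousOn {x₀ : ℝ} (hΦ : ConvexOn ℝ (Ioi x₀) Φ)
    (hΦc : ContinuousOn Φ (Ici x₀)) : ConvexOn ℝ (Ici x₀) Φ := by
  have hshift : ∀ t ∈ Ici x₀, Tendsto (fun ε => Φ (t + ε)) (𝓝[>] 0) (𝓝 (Φ t)) := by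
    intro t ht
    refine (hΦc t ht).tendsto.comp (tendsto_nhdsWithin_iff.2 ⟨?_, ?_⟩)
    · exact tendsto_nhdsWithin_of_tendsto_nhds ((continuous_const_add t).tendsto' 0 t (add_zero t))
    · filter_upwards [self_mem_nhdsWithin] with ε (hε : 0 < ε)
      exact le_add_of_le_of_nonneg ht hε.le
  refine ⟨convex_Ici x₀, fun x hx y hy a b ha hb hab => ?_⟩
  refine le_of_tendsto_of_tendsto (hshift _ ((convex_Ici x₀) hx hy ha hb hab))
    (((hshift x hx).const_mul a).add ((hshift y hy).const_mul b)) ?_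
  filter_upwards [self_mem_nhdsWithin] with ε (hε : 0 < ε)
  have hxε : x + ε ∈ Ioi x₀ := lt_add_of_le_of_pos hx hε
  have hyε : y + ε ∈ Ioi x₀ := lt_add_of_le_of_pos hy hε
  have key := hΦ.2 hxε hyε ha hb hab
  have harg : a • (x + ε) + b • (y + ε) = a • x + b • y + ε := by
    simp only [smul_eq_mul]; linear_combination ε * hab
  rwa [harg] at key

end ConvexOnIci

section Integrability

variable {μ : Measure Ω} {Φ : ℝ → ℝ}

theorem ContinuousOn.comp_aestronglyMeasurable_Ici {E : Type*} [TopologicalSpace E]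
    {g : ℝ → E} (hg : ContinuousOn g (Ici 0)) {f : Ω → ℝ} (hf : AEStronglyMeasurable f μ)
    (hf0 : 0 ≤ᵐ[μ] f) : AEStronglyMeasurable (fun ω => g (f ω)) μ := by
  have hcont : Continuous fun t => g (max t 0) :=
    hg.comp_continuous (continuous_id.max continuous_const) fun t => le_max_right t 0
  refine (hcont.comp_aestronglyMeasurable hf).congr ?_
  filter_upwards [hf0] with ω (hω : 0 ≤ f ω)
  simp only [max_eq_left hω]

variable [IsFiniteMeasure μ]

theorem ConvexOn.integrable_comp_of_ae_le (hΦ : ConvexOn ℝ (Ici 0) Φ)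
    (hΦc : ContinuousOn Φ (Ici 0)) {f g : Ω → ℝ} (hf : AEStronglyMeasurable f μ)
    (hf0 : 0 ≤ᵐ[μ] f) (hfg : f ≤ᵐ[μ] g) (hg : Integrable g μ)
    (hΦg : Integrable (fun ω => Φ (g ω)) μ) : Integrable (fun ω => Φ (f ω)) μ := by
  obtain ⟨c, c', hcc'⟩ := hΦ.exists_affine_le_real isClosed_Ici hΦc.lowerSemicontinuousOn
  have hfi : Integrable f μ := hg.mono' hf (by
    filter_upwards [hf0, hfg] with ω h0 h1
    rwa [Real.norm_eq_abs, abs_of_nonneg h0])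
  refine integrable_of_le_of_le (g₁ := fun ω => c * f ω + c')
    (g₂ := fun ω => max (Φ 0) (Φ (g ω))) (hΦc.comp_aestronglyMeasurable_Ici hf hf0) ?_ ?_
    ((hfi.const_mul c).add (integrable_const c')) ((integrable_const _).sup hΦg)
  · filter_upwards [hf0] with ω h0 using hcc' _ h0
  · filter_upwards [hf0, hfg] with ω (h0 : 0 ≤ f ω) h1
    refine hΦ.le_on_segment self_mem_Ici (mem_Ici.2 (h0.trans h1)) ?_
    rw [segment_eq_Icc (h0.trans h1)]
    exact ⟨h0, h1⟩

theorem ConvexOn.integrable_comp_sum_mul {ι : Type*} [Fintype ι] (hΦ : ConvexOn ℝ (Ici 0) Φ)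
    (hΦc : ContinuousOn Φ (Ici 0)) {w : ι → ℝ} (hw0 : ∀ i, 0 ≤ w i) (hw1 : ∑ i, w i = 1)
    {D : ι → Ω → ℝ} (hD0 : ∀ i, 0 ≤ᵐ[μ] D i) (hD : ∀ i, Integrable (D i) μ)
    (hΦD : ∀ i, Integrable (fun ω => Φ (D i ω)) μ) :
    Integrable (fun ω => Φ (∑ i, w i * D i ω)) μ := by
  obtain ⟨c, c', hcc'⟩ := hΦ.exists_affine_le_real isClosed_Ici hΦc.lowerSemicontinuousOn
  have hD0' : ∀ᵐ ω ∂μ, ∀ i, 0 ≤ D i ω := eventually_all.2 hD0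
  have hsum0 : 0 ≤ᵐ[μ] fun ω => ∑ i, w i * D i ω := hD0'.mono fun ω h =>
    Finset.sum_nonneg fun i _ => mul_nonneg (hw0 i) (h i)
  have hsum : Integrable (fun ω => ∑ i, w i * D i ω) μ :=
    integrable_finsetSum _ fun i _ => (hD i).const_mul _
  refine integrable_of_le_of_le (g₁ := fun ω => c * ∑ i, w i * D i ω + c')
    (g₂ := fun ω => ∑ i, w i * Φ (D i ω))
    (hΦc.comp_aestronglyMeasurable_Ici hsum.aestronglyMeasurable hsum0) ?_ ?_
    ((hsum.const_mul c).add (integrable_const c'))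
    (integrable_finsetSum _ fun i _ => (hΦD i).const_mul _)
  · filter_upwards [hsum0] with ω h using hcc' _ h
  · filter_upwards [hD0'] with ω h
    simpa only [smul_eq_mul] using
      hΦ.map_sum_le (t := Finset.univ) (fun i _ => hw0 i) hw1 (fun i _ => h i)

theorem ConvexOn.integrable_comp_const_mul (hΦ : ConvexOn ℝ (Ici 0) Φ)
    (hΦc : ContinuousOn Φ (Ici 0)) {a b S : ℝ} (ha : 0 ≤ a) (hb : 0 ≤ b) (hS : 0 ≤ S)
    (hgrowth : ∀ y, 0 < y → max (Φ (S * y)) 0 ≤ a * max (Φ y) 0 + b * (y + 1))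
    {y : Ω → ℝ} (hy0 : 0 ≤ᵐ[μ] y) (hy : Integrable y μ)
    (hΦy : Integrable (fun ω => Φ (y ω)) μ) : Integrable (fun ω => Φ (S * y ω)) μ := by
  obtain ⟨c, c', hcc'⟩ := hΦ.exists_affine_le_real isClosed_Ici hΦc.lowerSemicontinuousOn
  have hSy0 : 0 ≤ᵐ[μ] fun ω => S * y ω := hy0.mono fun ω h => mul_nonneg hS h
  -- `hgrowth` says nothing at `y = 0`, where `Φ (S * 0) = Φ 0` is absorbed by `|Φ 0|`.
  refine integrable_of_le_of_le (g₁ := fun ω => c * (S * y ω) + c')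
    (g₂ := fun ω => a * max (Φ (y ω)) 0 + b * (y ω + 1) + |Φ 0|)
    (hΦc.comp_aestronglyMeasurable_Ici (hy.const_mul S).aestronglyMeasurable hSy0) ?_ ?_
    (((hy.const_mul S).const_mul c).add (integrable_const c'))
    (((hΦy.pos_part.const_mul a).add ((hy.add (integrable_const 1)).const_mul b)).add
      (integrable_const _))
  · filter_upwards [hSy0] with ω h using hcc' _ h
  · filter_upwards [hy0] with ω (h : 0 ≤ y ω)
    have hrest : 0 ≤ a * max (Φ (y ω)) 0 + b * (y ω + 1) :=
      add_nonneg (mul_nonneg ha (le_max_right _ _)) (mul_nonneg hb (by linarith))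
    rcases h.eq_or_lt with h | h
    · rw [← h] at hrest ⊢
      rw [mul_zero]
      linarith [le_abs_self (Φ 0)]
    · linarith [hgrowth _ h, le_max_left (Φ (S * y ω)) 0, abs_nonneg (Φ 0)]

theorem ConvexOn.integrable_comp_sum_nonneg_mul {ι : Type*} [Fintype ι]
    (hΦ : ConvexOn ℝ (Ici 0) Φ) (hΦc : ContinuousOn Φ (Ici 0)) (hG : GrowthCondition Φ)
    {c : ι → ℝ} (hc : ∀ i, 0 ≤ c i) {D : ι → Ω → ℝ} (hD0 : ∀ i, 0 ≤ᵐ[μ] D i)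
    (hD : ∀ i, Integrable (D i) μ) (hΦD : ∀ i, Integrable (fun ω => Φ (D i ω)) μ) :
    Integrable (fun ω => Φ (∑ i, c i * D i ω)) μ := by
  set s := ∑ i, c i
  rcases (Finset.sum_nonneg fun i _ => hc i : 0 ≤ s).eq_or_lt with hs | hs
  · have hc0 : ∀ i, c i = 0 := fun i =>
      (Finset.sum_eq_zero_iff_of_nonneg fun i _ => hc i).1 hs.symm i (Finset.mem_univ i)
    simp only [hc0, zero_mul, Finset.sum_const_zero]
    exact integrable_const _
  obtain ⟨a, ha, b, hb, hab⟩ := hG s s hs le_rfl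
  have hw0 : ∀ i, 0 ≤ c i / s := fun i => div_nonneg (hc i) hs.le
  have hw1 : ∑ i, c i / s = 1 := by rw [← Finset.sum_div, div_self hs.ne']
  have hsum : ∀ ω, ∑ i, c i * D i ω = s * ∑ i, c i / s * D i ω := fun ω => by
    rw [Finset.mul_sum]
    refine Finset.sum_congr rfl fun i _ => ?_
    rw [← mul_assoc, mul_div_cancel₀ _ hs.ne']
  simp only [hsum]
  refine hΦ.integrable_comp_const_mul hΦc ha.le hb.le hs.le
    (fun y hy => hab y hy s ⟨le_rfl, le_rfl⟩) ?_ ?_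
    (hΦ.integrable_comp_sum_mul hΦc hw0 hw1 hD0 hD hΦD)
  · filter_upwards [eventually_all.2 hD0] with ω h
    exact Finset.sum_nonneg fun i _ => mul_nonneg (hw0 i) (h i)
  · exact integrable_finsetSum _ fun i _ => (hD i).const_mul _

theorem ConvexOn.integrable_comp_of_ae_le_sum_mul {ι : Type*} [Fintype ι]
    (hΦ : ConvexOn ℝ (Ici 0) Φ) (hΦc : ContinuousOn Φ (Ici 0)) (hG : GrowthCondition Φ)
    {D : ι → Ω → ℝ} (hD0 : ∀ i, 0 ≤ᵐ[μ] D i) (hD : ∀ i, Integrable (D i) μ)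
    (hΦD : ∀ i, Integrable (fun ω => Φ (D i ω)) μ) (c : ι → ℝ) {f : Ω → ℝ}
    (hf : AEStronglyMeasurable f μ) (hf0 : 0 ≤ᵐ[μ] f)
    (hfD : ∀ᵐ ω ∂μ, f ω ≤ ∑ i, c i * D i ω) : Integrable (fun ω => Φ (f ω)) μ := by
  refine hΦ.integrable_comp_of_ae_le hΦc hf hf0 (g := fun ω => ∑ i, max (c i) 0 * D i ω) ?_
    (integrable_finsetSum _ fun i _ => (hD i).const_mul _)
    (hΦ.integrable_comp_sum_nonneg_mul hΦc hG (fun i => le_max_right _ _) hD0 hD hΦD)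
  filter_upwards [hfD, eventually_all.2 hD0] with ω hω hD0ω
  exact hω.trans (Finset.sum_le_sum fun i _ =>
    mul_le_mul_of_nonneg_right (le_max_left _ _) (hD0ω i))

end Integrability

theorem coeFn_densAE (P Q : Measure Ω) : densAE P Q =ᵐ[P] fun ω => (Q.rnDeriv P ω).toReal :=
  AEEqFun.coeFn_mk _ _

theorem exists_eq_sum_of_mem_span_densAE {P : Measure Ω} {M : Set (Measure Ω)}
    {z : Ω →ₘ[P] ℝ} (hz : z ∈ Submodule.span ℝ (densAE P '' M)) :
    ∃ (n : ℕ) (c : Fin n → ℝ) (Q : Fin n → Measure Ω), (∀ i, Q i ∈ M) ∧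
      z =ᵐ[P] fun ω => ∑ i, c i * ((Q i).rnDeriv P ω).toReal := by
  obtain ⟨n, c, g, rfl⟩ := Submodule.mem_span_set'.1 hz
  choose Q hQ hgQ using fun i => (g i).2
  have hterm : ∀ i, ⇑(c i • (g i : Ω →ₘ[P] ℝ)) =ᵐ[P]
      fun ω => c i * ((Q i).rnDeriv P ω).toReal := fun i => by
    filter_upwards [AEEqFun.coeFn_smul (c i) (g i : Ω →ₘ[P] ℝ), hgQ i ▸ coeFn_densAE P (Q i)]
      with ω h1 h2
    rw [h1, Pi.smul_apply, h2, smul_eq_mul]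
  refine ⟨n, c, Q, hQ, (AEEqFun.coeFn_finsetSum _ _).trans ?_⟩
  filter_upwards [eventually_all.2 hterm] with ω h
  simp only [Finset.sum_apply, h]

theorem integrable_of_mem_span_densAE {P : Measure Ω} {M : Set (Measure Ω)}
    (hM : ∀ Q ∈ M, IsFiniteMeasure Q) {z : Ω →ₘ[P] ℝ}
    (hz : z ∈ Submodule.span ℝ (densAE P '' M)) : Integrable z P := by
  obtain ⟨n, c, Q, hQ, hz⟩ := exists_eq_sum_of_mem_span_densAE hz
  have := fun i => hM _ (hQ i)
  exact (integrable_finsetSum _ fun i _ =>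
    Measure.integrable_toReal_rnDeriv.const_mul (c i)).congr hz.symm

theorem integral_densAE_mul {P Q : Measure Ω} [SigmaFinite P] [SigmaFinite Q] (hQP : Q ≪ P)
    (f : Ω → ℝ) : ∫ ω, densAE P Q ω * f ω ∂P = ∫ ω, f ω ∂Q := by
  rw [← integral_rnDeriv_smul hQP]
  refine integral_congr_ae ?_
  filter_upwards [coeFn_densAE P Q] with ω h
  rw [h, smul_eq_mul]

theorem densAE_withDensity (P : Measure Ω) [SigmaFinite P] {ρ : Ω →ₘ[P] ℝ} (hρ : 0 ≤ᵐ[P] ρ) :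
    densAE P (P.withDensity fun ω => ENNReal.ofReal (ρ ω)) = ρ := by
  refine AEEqFun.ext ((coeFn_densAE _ _).trans ?_)
  filter_upwards [Measure.rnDeriv_withDensity P ρ.measurable.ennreal_ofReal, hρ] with ω h h0
  rw [h, ENNReal.toReal_ofReal h0]

theorem MeasureTheory.MemLp.integrable_of_absolutelyContinuous {P Q : Measure Ω} [IsFiniteMeasure Q]
    {g : Ω → ℝ} (hg : MemLp g ⊤ P) (hQP : Q ≪ P) : Integrable g Q := by
  refine MemLp.integrable le_top ⟨hg.1.mono_ac hQP, ?_⟩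
  rw [eLpNorm_exponent_top]
  exact (eLpNormEssSup_mono_measure g hQP).trans_lt (by simpa using hg.2)

theorem ae_nonneg_of_integral_mul_nonpos {μ : Measure Ω} {z : Ω → ℝ} (hz : Integrable z μ)
    (h : ∀ f : Ω → ℝ, MemLp f ⊤ μ → (∀ᵐ ω ∂μ, f ω ≤ 0) → ∫ ω, z ω * f ω ∂μ ≤ 0) :
    0 ≤ᵐ[μ] z := by
  refine ae_nonneg_of_forall_setIntegral_nonneg hz fun s hs hμs => ?_
  have hind := h (-s.indicator fun _ => 1)
    (memLp_indicator_const ⊤ hs (1 : ℝ) (Or.inr hμs.ne)).neg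
    (ae_of_all _ fun ω => neg_nonpos.2 (indicator_nonneg (fun _ _ => zero_le_one) ω))
  have hmul : ∀ ω, z ω * (-s.indicator (fun _ => (1 : ℝ))) ω = -s.indicator z ω := fun ω => by
    by_cases hω : ω ∈ s <;> simp [hω]
  simp only [hmul, integral_neg, integral_indicator hs, neg_nonpos] at hind
  exact hind

section Polar

variable {P : Measure Ω} {C : Set (Ω → ℝ)} {Φ : ℝ → ℝ}

theorem subset_CPhi (hCbdd : ∀ g ∈ C, MemLp g ⊤ P) : C ⊆ CPhi P C Φ := fun g hg Q hQ =>
  have := hQ.1.1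
  ⟨(hCbdd g hg).integrable_of_absolutelyContinuous hQ.1.2.1,
    fun ε hε => ⟨g, hg, by simpa using hε⟩⟩

theorem integral_nonpos_of_mem_CPhi (hCbdd : ∀ g ∈ C, MemLp g ⊤ P) {f : Ω → ℝ}
    (hf : f ∈ CPhi P C Φ) {Q : Measure Ω} (hQ : Q ∈ MPhi P C Φ) : ∫ ω, f ω ∂Q ≤ 0 := by
  obtain ⟨hfi, happrox⟩ := hf Q hQ
  obtain ⟨⟨hQprob, hQP, hQC⟩, -⟩ := hQ
  refine le_of_forall_pos_le_add fun ε hε => ?_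
  obtain ⟨g, hg, hfg⟩ := happrox ε hε
  have hgi : Integrable g Q := (hCbdd g hg).integrable_of_absolutelyContinuous hQP
  calc ∫ ω, f ω ∂Q = ∫ ω, (f ω - g ω) ∂Q + ∫ ω, g ω ∂Q := by
        rw [integral_sub hfi hgi, sub_add_cancel]
    _ ≤ ε + 0 := add_le_add
        ((integral_mono (hfi.sub hgi) (hfi.sub hgi).abs fun ω => le_abs_self _).trans hfg.le)
        (hQC g hg)
    _ = 0 + ε := by ring

theorem integral_smul_densAE_mul_nonpos [SigmaFinite P] (hCbdd : ∀ g ∈ C, MemLp g ⊤ P)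
    {l : ℝ} (hl : 0 ≤ l) {Q : Measure Ω} (hQ : Q ∈ MPhi P C Φ) {f : Ω → ℝ}
    (hf : f ∈ CPhi P C Φ) : ∫ ω, (l • densAE P Q) ω * f ω ∂P ≤ 0 := by
  have := hQ.1.1
  have hsmul : ∫ ω, (l • densAE P Q) ω * f ω ∂P = l * ∫ ω, densAE P Q ω * f ω ∂P := by
    rw [← integral_const_mul]
    refine integral_congr_ae ?_
    filter_upwards [AEEqFun.coeFn_smul l (densAE P Q)] with ω h
    rw [h, Pi.smul_apply, smul_eq_mul, mul_assoc]
  rw [hsmul, integral_densAE_mul hQ.1.2.1]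
  exact mul_nonpos_of_nonneg_of_nonpos hl (integral_nonpos_of_mem_CPhi hCbdd hf hQ)

theorem withDensity_mem_MPhi [IsProbabilityMeasure P] {ρ : Ω →ₘ[P] ℝ} (hρ0 : 0 ≤ᵐ[P] ρ)
    (hρ1 : ∫ ω, ρ ω ∂P = 1) (hρC : ∀ g ∈ C, ∫ ω, ρ ω * g ω ∂P ≤ 0)
    (hΦρ : Integrable (fun ω => Φ (ρ ω)) P) :
    P.withDensity (fun ω => ENNReal.ofReal (ρ ω)) ∈ MPhi P C Φ := by
  set Q := P.withDensity fun ω => ENNReal.ofReal (ρ ω)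
  have hQP : Q ≪ P := withDensity_absolutelyContinuous _ _
  have hdens : densAE P Q = ρ := densAE_withDensity P hρ0
  have hρi : Integrable ρ P := Integrable.of_integral_ne_zero (by rw [hρ1]; exact one_ne_zero)
  have : IsProbabilityMeasure Q := ⟨by
    rw [withDensity_apply _ MeasurableSet.univ, setLIntegral_univ,
      ← ofReal_integral_eq_lintegral_ofReal hρi hρ0, hρ1, ENNReal.ofReal_one]⟩
  refine ⟨⟨inferInstance, hQP, fun g hg => ?_⟩, hΦρ.congr ?_⟩
  · rw [← integral_densAE_mul hQP, hdens]
    exact hρC g hg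
  · filter_upwards [coeFn_densAE P Q] with ω h
    rw [← h, hdens]

theorem ConvexOn.integrable_comp_of_mem_span_densAE [IsFiniteMeasure P]
    (hΦ : ConvexOn ℝ (Ici 0) Φ) (hΦc : ContinuousOn Φ (Ici 0)) (hG : GrowthCondition Φ)
    {z : Ω →ₘ[P] ℝ} (hz : z ∈ Submodule.span ℝ (densAE P '' MPhi P C Φ)) (hz0 : 0 ≤ᵐ[P] z) :
    Integrable (fun ω => Φ (z ω)) P := by
  obtain ⟨n, c, Q, hQ, hzD⟩ := exists_eq_sum_of_mem_span_densAE hz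
  have := fun i => (hQ i).1.1
  exact hΦ.integrable_comp_of_ae_le_sum_mul hΦc hG
    (fun i => ae_of_all _ fun _ => ENNReal.toReal_nonneg)
    (fun i => Measure.integrable_toReal_rnDeriv) (fun i => (hQ i).2) c
    z.aestronglyMeasurable hz0 hzD.le

theorem exists_eq_smul_densAE_of_mem_polar [IsProbabilityMeasure P]
    (hCbdd : ∀ g ∈ C, MemLp g ⊤ P)
    (hCneg : ∀ f : Ω → ℝ, MemLp f ⊤ P → (∀ᵐ ω ∂P, f ω ≤ 0) → f ∈ C)
    (hΦ : ConvexOn ℝ (Ici 0) Φ) (hΦc : ContinuousOn Φ (Ici 0)) (hG : GrowthCondition Φ)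
    (hM : (MPhi P C Φ).Nonempty) {z : Ω →ₘ[P] ℝ}
    (hspan : z ∈ Submodule.span ℝ (densAE P '' MPhi P C Φ))
    (hpolar : ∀ f ∈ CPhi P C Φ, ∫ ω, z ω * f ω ∂P ≤ 0) :
    ∃ l : ℝ, 0 ≤ l ∧ ∃ Q ∈ MPhi P C Φ, z = l • densAE P Q := by
  have hzi : Integrable z P :=
    integrable_of_mem_span_densAE (fun _ hQ => by have := hQ.1.1; infer_instance) hspan
  have hz0 : 0 ≤ᵐ[P] z := ae_nonneg_of_integral_mul_nonpos hzi fun f hf hf0 =>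
    hpolar f (subset_CPhi hCbdd (hCneg f hf hf0))
  rcases (integral_nonneg_of_ae hz0).eq_or_lt with hl | hl
  · obtain ⟨Q₀, hQ₀⟩ := hM
    refine ⟨0, le_rfl, Q₀, hQ₀, ?_⟩
    rw [zero_smul]
    exact AEEqFun.ext
      (((integral_eq_zero_iff_of_nonneg_ae hz0 hzi).1 hl.symm).trans AEEqFun.coeFn_zero.symm)
  set l := ∫ ω, z ω ∂P
  have hl' : 0 ≤ l⁻¹ := inv_nonneg.2 hl.le
  have hρ : ⇑(l⁻¹ • z) =ᵐ[P] fun ω => l⁻¹ * z ω := AEEqFun.coeFn_smul _ _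
  have hρ0 : 0 ≤ᵐ[P] (l⁻¹ • z) := by
    filter_upwards [hρ, hz0] with ω h (h0 : 0 ≤ z ω)
    rw [h]
    exact mul_nonneg hl' h0
  refine ⟨l, hl.le, _, withDensity_mem_MPhi hρ0 ?_ (fun g hg => ?_)
    (hΦ.integrable_comp_of_mem_span_densAE hΦc hG (Submodule.smul_mem _ _ hspan) hρ0), ?_⟩
  · rw [integral_congr_ae hρ, integral_const_mul, inv_mul_cancel₀ hl.ne']
  · have hρg : ∫ ω, (l⁻¹ • z) ω * g ω ∂P = l⁻¹ * ∫ ω, z ω * g ω ∂P := by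
      rw [← integral_const_mul]
      refine integral_congr_ae ?_
      filter_upwards [hρ] with ω h
      rw [h, mul_assoc]
    rw [hρg]
    exact mul_nonpos_of_nonneg_of_nonpos hl' (hpolar g (subset_CPhi hCbdd hg))
  · rw [densAE_withDensity P hρ0, smul_inv_smul₀ hl.ne']

end Polar

theorem polar_of_CPhi_eq_cone_of_MPhi_general
    (P : Measure Ω) [IsProbabilityMeasure P]
    (C : Set (Ω → ℝ))
    (hCbdd : ∀ g ∈ C, MemLp g ⊤ P)
    (hCneg : ∀ f : Ω → ℝ, MemLp f ⊤ P → (∀ᵐ ω ∂P, f ω ≤ 0) → f ∈ C)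
    (Φ : ℝ → ℝ)
    (hΦconv : ConvexOn ℝ (Set.Ioi 0) Φ)
    (hΦgrowth : ∀ l₀ l₁ : ℝ, 0 < l₀ → l₀ ≤ l₁ → ∃ a : ℝ, 0 < a ∧ ∃ b : ℝ, 0 < b ∧
      ∀ y : ℝ, 0 < y → ∀ l ∈ Set.Icc l₀ l₁,
        max (Φ (l * y)) 0 ≤ a * max (Φ y) 0 + b * (y + 1))
    (hΦ0 : Tendsto Φ (nhdsWithin 0 (Set.Ioi 0)) (nhds (Φ 0)))
    (hMPhiP : ∃ Q ∈ MPhi P C Φ, P ≪ Q) :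
    {z : Ω →ₘ[P] ℝ | z ∈ Submodule.span ℝ (densAE P '' MPhi P C Φ) ∧
        ∀ f ∈ CPhi P C Φ, ∫ ω, z ω * f ω ∂P ≤ 0} =
      {z : Ω →ₘ[P] ℝ | ∃ l : ℝ, 0 ≤ l ∧ ∃ Q ∈ MPhi P C Φ, z = l • densAE P Q} := by
  have hΦc : ContinuousOn Φ (Ici 0) := hΦconv.continuousOn_Ici_of_tendsto hΦ0
  have hΦ : ConvexOn ℝ (Ici 0) Φ := hΦconv.convexOn_Ici_of_continuousOn hΦc
  obtain ⟨Q₀, hQ₀, -⟩ := hMPhiP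
  ext z
  constructor
  · rintro ⟨hspan, hpolar⟩
    exact exists_eq_smul_densAE_of_mem_polar hCbdd hCneg hΦ hΦc hΦgrowth ⟨Q₀, hQ₀⟩ hspan hpolar
  · rintro ⟨l, hl, Q, hQ, rfl⟩
    exact ⟨Submodule.smul_mem _ l (Submodule.subset_span ⟨Q, hQ, rfl⟩),
      fun f hf => integral_smul_densAE_mul_nonpos hCbdd hl hQ hf⟩

/-- Theorem 17(b) of Biagini–Frittelli: if `Φ(0) < +∞` and `M_Φ` contains a measure
equivalent to `P`, then the polar of `C_Φ` inside the linear span `Lin(M_Φ)` of the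
densities of `M_Φ` is exactly the convex cone `co(M_Φ)` generated by `M_Φ`; hence `C_Φ`
and `co(M_Φ)` are polar to one another. -/
theorem polar_of_CPhi_eq_cone_of_MPhi
    (P : Measure Ω) [IsProbabilityMeasure P]
    (C : Set (Ω → ℝ))
    (hCbdd : ∀ g ∈ C, MemLp g ⊤ P)
    (hCcone : ∀ f ∈ C, ∀ g ∈ C, ∀ a b : ℝ, 0 ≤ a → 0 ≤ b →
      (fun ω => a * f ω + b * g ω) ∈ C)
    (hCneg : ∀ f : Ω → ℝ, MemLp f ⊤ P → (∀ᵐ ω ∂P, f ω ≤ 0) → f ∈ C)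
    (Φ : ℝ → ℝ)
    (hΦconv : ConvexOn ℝ (Set.Ioi 0) Φ)
    (hΦgrowth : ∀ l₀ l₁ : ℝ, 0 < l₀ → l₀ ≤ l₁ → ∃ a : ℝ, 0 < a ∧ ∃ b : ℝ, 0 < b ∧
      ∀ y : ℝ, 0 < y → ∀ l ∈ Set.Icc l₀ l₁,
        max (Φ (l * y)) 0 ≤ a * max (Φ y) 0 + b * (y + 1))
    (hΦ0 : Tendsto Φ (nhdsWithin 0 (Set.Ioi 0)) (nhds (Φ 0)))
    (hMPhiP : ∃ Q ∈ MPhi P C Φ, P ≪ Q) :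
    {z : Ω →ₘ[P] ℝ | z ∈ Submodule.span ℝ (densAE P '' MPhi P C Φ) ∧
        ∀ f ∈ CPhi P C Φ, ∫ ω, z ω * f ω ∂P ≤ 0} =
      {z : Ω →ₘ[P] ℝ | ∃ l : ℝ, 0 ≤ l ∧ ∃ Q ∈ MPhi P C Φ, z = l • densAE P Q} :=
  polar_of_CPhi_eq_cone_of_MPhi_general P C hCbdd hCneg Φ hΦconv hΦgrowth hΦ0 hMPhiP
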